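/- Let p ≥ 5 be a prime and n = p². The binary code obtained from the array code C(r = p, p, S = {0,1,2,3,4}) by appending one additional global parity bit equal to the sum of all p² information bits is a 5-batch code of dimension p² and length p² + 5p + 1. In particular, r_B(p², 5) ≤ 5p + 1 = Θ(√n). -/

import Mathlib

/-- The diagonal `D_{s,t} = { (i, (t + i·s) mod p) : i ∈ [r] } ⊆ [r] × [p]`. -/
def diag (r p s t : ℕ) : Finset (ℕ × ℕ) :=
  (Finset.range r).image fun i => (i, (t + i * s) % p)

/-- The encoder of the code extending the array code `C(r = p, p, S = {0,1,2,3,4})` by one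
additional global parity bit: the `p × p` information array `x` is kept systematically, for
each slope `ℓ ∈ {0,…,4}` and each `t ∈ [p]` the parity bit
`ρ_{ℓ,t} = ∑_{(i,j) ∈ D_{ℓ,t}} x_{i,j}` is appended, and finally one global parity bit
`∑_{(i,j)} x_{i,j}` is appended. -/
def ext5Encode (p : ℕ) (x : Fin p × Fin p → ZMod 2) :
    (Fin p × Fin p) ⊕ (Fin 5 × Fin p) ⊕ Unit → ZMod 2 :=
  fun c =>
    match c with
    | Sum.inl ij => x ij
    | Sum.inr (Sum.inl (l, t)) =>
        ∑ ij ∈ Finset.univ.filter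
            (fun ij : Fin p × Fin p => ((ij.1 : ℕ), (ij.2 : ℕ)) ∈ diag p p (l : ℕ) (t : ℕ)),
          x ij
    | Sum.inr (Sum.inr _) => ∑ ij : Fin p × Fin p, x ij

/-!
Think of a cell as a point of the affine plane `𝔽_p²` and of the parity `ρ_{ℓ,t}` as the sum
over the line `{(i, j) : j - ℓ i = t}`; the slopes `0, …, 4` are distinct because `p ≥ 5`. A set
`𝓛` of lines recovers `x_u` from the parities of `𝓛` and the bits of the cells lying in an odd
number of the sets `{u}, L ∈ 𝓛`, since in characteristic 2 everything else cancels. Two such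
recoveries are disjoint when they use different lines and different cells, so it suffices to find
a pairwise compatible menu of recoveries offering each requested cell as many times as it is
requested; Hall's theorem then assigns them.

Every requested cell is read directly once. If at most one cell `c` is requested repeatedly, the
further copies of `c` use lines through `c` of slopes avoiding the other requested cells: two
lines through `c` meet only in `c`, and there are enough slopes because the other requested cells
block at most one slope each. For the pattern `c c d d e`, the second copies of `c` and `d` use
parallel lines. For `c c c d d`, the two further copies of `c` use lines `D₁, D₂` through `c`,
and `d` is recovered from three lines which cover every point of `D₁ ∪ D₂ ∪ {d}` an even number
of times, together with `{d}`.
-/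

open Finset
open scoped symmDiff

section Parity

variable {α ι R : Type*} [DecidableEq α] [Ring R] [CharP R 2]

theorem Finset.sum_symmDiff_of_charTwo (s t : Finset α) (x : α → R) :
    ∑ c ∈ s ∆ t, x c = ∑ c ∈ s, x c + ∑ c ∈ t, x c := by
  rw [symmDiff_def, sup_eq_union, sum_union disjoint_sdiff_sdiff, ← sum_inter_add_sum_sdiff s t,
    ← sum_inter_add_sum_sdiff t s, inter_comm t s, add_add_add_comm, CharTwo.add_self_eq_zero,
    zero_add]

def oddCells (cells : ι → Finset α) (𝓛 : Finset ι) (u : α) : Finset α :=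
  𝓛.fold (· ∆ ·) {u} cells

theorem oddCells_insert [DecidableEq ι] (cells : ι → Finset α) {𝓛 : Finset ι} {L : ι}
    (hL : L ∉ 𝓛) (u : α) : oddCells cells (insert L 𝓛) u = cells L ∆ oddCells cells 𝓛 u :=
  fold_insert hL

theorem mem_oddCells_insert [DecidableEq ι] (cells : ι → Finset α) {𝓛 : Finset ι} {L : ι}
    (hL : L ∉ 𝓛) (u z : α) :
    z ∈ oddCells cells (insert L 𝓛) u ↔ Xor (z ∈ cells L) (z ∈ oddCells cells 𝓛 u) := by
  rw [oddCells_insert cells hL, mem_symmDiff, xor_def]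

theorem mem_oddCells_singleton (cells : ι → Finset α) (L : ι) (u z : α) :
    z ∈ oddCells cells {L} u ↔ Xor (z ∈ cells L) (z = u) := by
  rw [oddCells, fold_singleton, mem_symmDiff, mem_singleton, xor_def]

theorem sum_oddCells (cells : ι → Finset α) (𝓛 : Finset ι) (u : α) (x : α → R) :
    ∑ c ∈ oddCells cells 𝓛 u, x c = x u + ∑ L ∈ 𝓛, ∑ c ∈ cells L, x c := by
  classical
  induction 𝓛 using Finset.induction_on with
  | empty => simp [oddCells]
  | insert L 𝓛 hL ih =>
    rw [oddCells_insert cells hL, sum_symmDiff_of_charTwo, ih, sum_insert hL]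
    abel

end Parity

theorem Finset.exists_injective_mem_filter_eq {ι α β : Type*} [Fintype ι] [DecidableEq α]
    [DecidableEq β] (g : ι → α) (t : β → α) (M : Finset β)
    (h : ∀ u, #{i | g i = u} ≤ #{m ∈ M | t m = u}) :
    ∃ f : ι → β, Function.Injective f ∧ ∀ i, f i ∈ M ∧ t (f i) = g i := by
  have hdisj : ∀ s : Finset ι, ((s.image g : Finset α) : Set α).PairwiseDisjoint
      fun u => {m ∈ M | t m = u} :=
    fun s u _ v _ huv => disjoint_filter.2 fun m _ hu hv => huv (hu ▸ hv)
  have hall : ∀ s : Finset ι, #s ≤ #(s.biUnion fun i => {m ∈ M | t m = g i}) := fun s =>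
    calc #s = ∑ u ∈ s.image g, #{i ∈ s | g i = u} := card_eq_sum_card_image g s
      _ ≤ ∑ u ∈ s.image g, #{m ∈ M | t m = u} := sum_le_sum fun u _ =>
          (card_le_card (filter_subset_filter _ (subset_univ s))).trans (h u)
      _ = #(s.biUnion fun i => {m ∈ M | t m = g i}) := by
          rw [← card_biUnion (hdisj s), image_biUnion]
  obtain ⟨f, hf, hmem⟩ := (all_card_le_biUnion_card_iff_exists_injective _).1 hall
  exact ⟨f, hf, fun i => by simpa using hmem i⟩

theorem Finset.sum_card_filter_eq_le {ι α : Type*} [Fintype ι] [DecidableEq α] (f : ι → α)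
    (S : Finset α) : ∑ u ∈ S, #{i | f i = u} ≤ Fintype.card ι :=
  (sum_card_fiberwise_eq_card_filter univ S f).trans_le (card_filter_le _ _)

theorem Prod.eq_of_sub_mul_eq {F : Type*} [Field F] {s s' : F} (hs : s ≠ s') {z z' : F × F}
    (h : z.2 - s * z.1 = z'.2 - s * z'.1) (h' : z.2 - s' * z.1 = z'.2 - s' * z'.1) : z = z' := by
  have h₁ : z.1 = z'.1 := mul_left_cancel₀ (sub_ne_zero.2 hs) (by linear_combination h' - h)
  exact Prod.ext h₁ (by linear_combination h + s * h₁)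

theorem exists_sub_mul_eq_and_sub_mul_eq {F : Type*} [Field F] {s s' : F} (hs : s ≠ s')
    (t t' : F) : ∃ z : F × F, z.2 - s * z.1 = t ∧ z.2 - s' * z.1 = t' := by
  have hs' : s' - s ≠ 0 := sub_ne_zero.2 hs.symm
  refine ⟨((t - t') / (s' - s), t + s * ((t - t') / (s' - s))), by ring, ?_⟩
  field_simp
  ring

namespace ArrayCode

variable {p : ℕ}

abbrev Cell (p : ℕ) := Fin p × Fin p

abbrev Line (p : ℕ) := Fin 5 × Fin p

abbrev Coord (p : ℕ) := Cell p ⊕ Line p ⊕ Unit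

def lineCells (L : Line p) : Finset (Cell p) :=
  {ij | ((ij.1 : ℕ), (ij.2 : ℕ)) ∈ _root_.diag p p L.1 L.2}

theorem ext5Encode_inr_inl (x : Cell p → ZMod 2) (L : Line p) :
    ext5Encode p x (.inr (.inl L)) = ∑ c ∈ lineCells L, x c := rfl

/-- A plan `(𝓛, u)` recovers the bit of `u` from the parities of the lines in `𝓛` and the
information bits of the cells in `odd (𝓛, u)`. -/
abbrev Plan (p : ℕ) := Finset (Line p) × Cell p

namespace Plan

def odd (P : Plan p) : Finset (Cell p) := oddCells lineCells P.1 P.2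

def coords (P : Plan p) : Finset (Coord p) := P.odd.disjSum (P.1.disjSum ∅)

theorem recovers (P : Plan p) {x x' : Cell p → ZMod 2}
    (h : ∀ c ∈ P.coords, ext5Encode p x c = ext5Encode p x' c) : x P.2 = x' P.2 := by
  have hodd : ∑ c ∈ P.odd, x c = ∑ c ∈ P.odd, x' c :=
    sum_congr rfl fun c hc => h (.inl c) (by simpa [coords] using hc)
  have hlines : ∑ L ∈ P.1, ∑ c ∈ lineCells L, x c = ∑ L ∈ P.1, ∑ c ∈ lineCells L, x' c :=
    sum_congr rfl fun L hL => by
      simpa only [ext5Encode_inr_inl] using h (.inr (.inl L)) (by simpa [coords] using hL)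
  rw [odd, sum_oddCells, sum_oddCells, hlines] at hodd
  exact add_right_cancel hodd

def Compatible (P Q : Plan p) : Prop := Disjoint P.1 Q.1 ∧ Disjoint P.odd Q.odd

theorem Compatible.symm {P Q : Plan p} (h : P.Compatible Q) : Q.Compatible P :=
  ⟨h.1.symm, h.2.symm⟩

instance : Std.Symm (Compatible (p := p)) := ⟨fun _ _ h => h.symm⟩

theorem Compatible.disjoint_coords {P Q : Plan p} (h : P.Compatible Q) :
    Disjoint P.coords Q.coords := by
  rw [disjoint_left]
  rintro (c | L | u) hP hQ
  · simp only [coords, inl_mem_disjSum] at hP hQ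
    exact disjoint_left.1 h.2 hP hQ
  · simp only [coords, inr_mem_disjSum, inl_mem_disjSum] at hP hQ
    exact disjoint_left.1 h.1 hP hQ
  · simp [coords] at hP

def direct (u : Cell p) : Plan p := (∅, u)

theorem compatible_direct_of_notMem {u : Cell p} {Q : Plan p} (h : u ∉ Q.odd) :
    (direct u).Compatible Q :=
  ⟨disjoint_empty_left _, disjoint_singleton_left.2 h⟩

theorem compatible_direct_direct {u v : Cell p} (h : u ≠ v) : (direct u).Compatible (direct v) :=
  compatible_direct_of_notMem (by simpa [direct, odd, oddCells] using h)

end Plan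

def IsBatchRecovery (req : Fin 5 → Cell p) (R : Fin 5 → Finset (Coord p)) : Prop :=
  (∀ a b, a ≠ b → Disjoint (R a) (R b)) ∧
    ∀ a, ∀ x x' : Cell p → ZMod 2,
      (∀ c ∈ R a, ext5Encode p x c = ext5Encode p x' c) → x (req a) = x' (req a)

theorem exists_isBatchRecovery_of_menu (req : Fin 5 → Cell p) (M : Finset (Plan p))
    (hM : (M : Set (Plan p)).Pairwise Plan.Compatible)
    (hcard : ∀ a, #{b | req b = req a} ≤ #{P ∈ M | P.2 = req a}) :
    ∃ R, IsBatchRecovery req R := by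
  have hcard' : ∀ u, #{b | req b = u} ≤ #{P ∈ M | P.2 = u} := by
    intro u
    by_cases hu : ∃ a, req a = u
    · obtain ⟨a, rfl⟩ := hu
      exact hcard a
    · simp [not_exists.1 hu]
  obtain ⟨f, hf, hfM⟩ := exists_injective_mem_filter_eq (β := Plan p) req Prod.snd M hcard'
  refine ⟨fun a => (f a).coords, fun a b hab => ?_, fun a x x' h => ?_⟩
  · exact (hM (hfM a).1 (hfM b).1 (hf.ne hab)).disjoint_coords
  · rw [← (hfM a).2]
    exact (f a).recovers h

def toPoint (c : Cell p) : ZMod p × ZMod p := ((c.1 : ℕ), (c.2 : ℕ))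

def slope (ℓ : Fin 5) : ZMod p := (ℓ : ℕ)

def intercept (ℓ : Fin 5) (c : Cell p) : ZMod p := (toPoint c).2 - slope ℓ * (toPoint c).1

theorem toPoint_injective : Function.Injective (toPoint : Cell p → ZMod p × ZMod p) := by
  intro c c' h
  simp only [toPoint, Prod.mk.injEq, ZMod.natCast_eq_natCast_iff', Nat.mod_eq_of_lt,
    Fin.is_lt] at h
  exact Prod.ext (Fin.ext h.1) (Fin.ext h.2)

theorem toPoint_surjective [NeZero p] :
    Function.Surjective (toPoint : Cell p → ZMod p × ZMod p) :=
  fun z => ⟨(⟨z.1.val, z.1.val_lt⟩, ⟨z.2.val, z.2.val_lt⟩), by simp [toPoint]⟩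

theorem slope_injective (hp5 : 5 ≤ p) : Function.Injective (slope : Fin 5 → ZMod p) := by
  intro ℓ ℓ' h
  simp only [slope, ZMod.natCast_eq_natCast_iff', Nat.mod_eq_of_lt (ℓ.is_lt.trans_le hp5),
    Nat.mod_eq_of_lt (ℓ'.is_lt.trans_le hp5)] at h
  exact Fin.ext h

theorem mem_lineCells {z : Cell p} {ℓ : Fin 5} {t : Fin p} :
    z ∈ lineCells (ℓ, t) ↔ intercept ℓ z = (t : ℕ) := by
  have hdiag : z ∈ lineCells (ℓ, t) ↔ (t + z.1 * ℓ : ℕ) % p = z.2 := by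
    simp [lineCells, _root_.diag]
  rw [hdiag, ← Nat.mod_eq_of_lt z.2.is_lt, ← ZMod.natCast_eq_natCast_iff', intercept, toPoint,
    slope, sub_eq_iff_eq_add]
  push_cast
  constructor <;> intro h <;> linear_combination -h

section Lines

variable [NeZero p]

def lineThru (ℓ : Fin 5) (c : Cell p) : Line p := (ℓ, ⟨(intercept ℓ c).val, ZMod.val_lt _⟩)

theorem mem_lineThru {ℓ : Fin 5} {c z : Cell p} :
    z ∈ lineCells (lineThru ℓ c) ↔ intercept ℓ z = intercept ℓ c := by
  rw [lineThru, mem_lineCells, ZMod.natCast_zmod_val]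

theorem lineThru_eq_lineThru_iff {ℓ ℓ' : Fin 5} {c c' : Cell p} :
    lineThru ℓ c = lineThru ℓ' c' ↔ ℓ = ℓ' ∧ intercept ℓ c = intercept ℓ' c' := by
  simp [lineThru, Fin.ext_iff, ZMod.val_injective _ |>.eq_iff]

namespace Plan

def viaLine (ℓ : Fin 5) (c : Cell p) : Plan p := ({lineThru ℓ c}, c)

theorem odd_viaLine (ℓ : Fin 5) (c : Cell p) :
    (viaLine ℓ c).odd = (lineCells (lineThru ℓ c)).erase c := by
  ext z
  rw [odd, viaLine, mem_oddCells_singleton, xor_def, mem_erase, mem_lineThru]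
  constructor
  · rintro (⟨h, hz⟩ | ⟨rfl, h⟩)
    · exact ⟨hz, h⟩
    · exact absurd rfl h
  · exact fun h => .inl ⟨h.2, h.1⟩

theorem compatible_viaLine_of_forall_notMem {ℓ : Fin 5} {c : Cell p} {Q : Plan p}
    (hL : lineThru ℓ c ∉ Q.1) (h : ∀ z, intercept ℓ z = intercept ℓ c → z ∉ Q.odd) :
    (viaLine ℓ c).Compatible Q := by
  refine ⟨disjoint_singleton_left.2 hL, disjoint_left.2 fun z hz => h z ?_⟩
  rw [odd_viaLine, mem_erase, mem_lineThru] at hz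
  exact hz.2

theorem compatible_direct_viaLine {u c : Cell p} {ℓ : Fin 5}
    (h : u ≠ c → intercept ℓ u ≠ intercept ℓ c) : (direct u).Compatible (viaLine ℓ c) :=
  compatible_direct_of_notMem fun hu => by
    rw [odd_viaLine, mem_erase, mem_lineThru] at hu
    exact h hu.1 hu.2

theorem compatible_viaLine_of_intercept_ne {ℓ : Fin 5} {c d : Cell p}
    (h : intercept ℓ c ≠ intercept ℓ d) : (viaLine ℓ c).Compatible (viaLine ℓ d) := by
  refine compatible_viaLine_of_forall_notMem
    (by simpa [viaLine, lineThru_eq_lineThru_iff] using h) fun z hz hzd => ?_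
  rw [odd_viaLine, mem_erase, mem_lineThru] at hzd
  exact h (hz.symm.trans hzd.2)

theorem mem_odd_three_lines {ℓ₁ ℓ₂ ℓ₃ : Fin 5} (h₁₂ : ℓ₁ ≠ ℓ₂) (h₁₃ : ℓ₁ ≠ ℓ₃) (h₂₃ : ℓ₂ ≠ ℓ₃)
    (c₁ c₂ c₃ u z : Cell p) :
    z ∈ odd ({lineThru ℓ₁ c₁, lineThru ℓ₂ c₂, lineThru ℓ₃ c₃}, u) ↔
      Xor (intercept ℓ₁ z = intercept ℓ₁ c₁)
        (Xor (intercept ℓ₂ z = intercept ℓ₂ c₂)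
          (Xor (intercept ℓ₃ z = intercept ℓ₃ c₃) (z = u))) := by
  rw [odd, mem_oddCells_insert _ (by simp [lineThru_eq_lineThru_iff, h₁₂, h₁₃]),
    mem_oddCells_insert _ (by simp [lineThru_eq_lineThru_iff, h₂₃]), mem_oddCells_singleton,
    mem_lineThru, mem_lineThru, mem_lineThru]

end Plan

end Lines

section Geometry

variable [Fact p.Prime]

theorem eq_of_intercept_eq (hp5 : 5 ≤ p) {ℓ ℓ' : Fin 5} (h : ℓ ≠ ℓ') {c c' : Cell p}
    (h₁ : intercept ℓ c = intercept ℓ c') (h₂ : intercept ℓ' c = intercept ℓ' c') : c = c' :=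
  toPoint_injective <| Prod.eq_of_sub_mul_eq ((slope_injective hp5).ne h) h₁ h₂

theorem exists_intercept_eq (hp5 : 5 ≤ p) {ℓ ℓ' : Fin 5} (h : ℓ ≠ ℓ') (t t' : ZMod p) :
    ∃ z : Cell p, intercept ℓ z = t ∧ intercept ℓ' z = t' := by
  obtain ⟨w, hw⟩ := exists_sub_mul_eq_and_sub_mul_eq ((slope_injective hp5).ne h) t t'
  obtain ⟨z, rfl⟩ := toPoint_surjective w
  exact ⟨z, hw⟩

def blockedSlopes (S : Finset (Cell p × Cell p)) : Finset (Fin 5) :=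
  {ℓ | ∃ q ∈ S, intercept ℓ q.1 = intercept ℓ q.2}

theorem card_blockedSlopes_le (hp5 : 5 ≤ p) {S : Finset (Cell p × Cell p)}
    (hS : ∀ q ∈ S, q.1 ≠ q.2) : #(blockedSlopes S) ≤ #S := by
  calc #(blockedSlopes S) ≤ #(S.biUnion fun q => {ℓ | intercept ℓ q.1 = intercept ℓ q.2}) :=
        card_le_card fun ℓ hℓ => by simpa [blockedSlopes] using hℓ
    _ ≤ ∑ q ∈ S, #{ℓ | intercept ℓ q.1 = intercept ℓ q.2} := card_biUnion_le
    _ ≤ ∑ _q ∈ S, 1 := sum_le_sum fun q hq => card_le_one.2 fun ℓ hℓ ℓ' hℓ' => by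
        by_contra hne
        simp only [mem_filter, mem_univ, true_and] at hℓ hℓ'
        exact hS q hq (eq_of_intercept_eq hp5 hne hℓ hℓ')
    _ = #S := by simp

theorem exists_slope_separating (hp5 : 5 ≤ p) (T : Finset (Fin 5))
    {S : Finset (Cell p × Cell p)} (hS : ∀ q ∈ S, q.1 ≠ q.2) (h : #T + #S < 5) :
    ∃ σ ∉ T, ∀ q ∈ S, intercept σ q.1 ≠ intercept σ q.2 := by
  obtain ⟨σ, -, hσ⟩ := exists_mem_notMem_of_card_lt_card (s := T ∪ blockedSlopes S) (t := univ) <|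
    calc #(T ∪ blockedSlopes S) ≤ #T + #S :=
          (card_union_le _ _).trans (Nat.add_le_add_left (card_blockedSlopes_le hp5 hS) _)
      _ < #(univ : Finset (Fin 5)) := by simpa using h
  simp only [mem_union, not_or, blockedSlopes, mem_filter, mem_univ, true_and, not_exists,
    not_and] at hσ
  exact ⟨σ, hσ.1, hσ.2⟩

theorem Plan.compatible_viaLine_of_ne (hp5 : 5 ≤ p) {ℓ ℓ' : Fin 5} (h : ℓ ≠ ℓ') (c : Cell p) :
    (viaLine ℓ c).Compatible (viaLine ℓ' c) := by
  refine compatible_viaLine_of_forall_notMem (by simp [viaLine, lineThru_eq_lineThru_iff, h])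
    fun z hz hz' => ?_
  rw [odd_viaLine, mem_erase, mem_lineThru] at hz'
  exact hz'.1 (eq_of_intercept_eq hp5 h hz hz'.2)

/-- With `D₁, D₂` the lines of slopes `ℓ₁, ℓ₂` through `c`, take `A` the `ℓ₁`-line through `d`,
`z₂ = A ∩ D₂`, `C` a line through `z₂` of a third slope `σ`, `z₁ = C ∩ D₁` and `B` the `ℓ₂`-line
through `z₁`. Then `A, B, C, {d}` cover `d` and every point of `D₁ ∪ D₂` an even number of times;
`σ` is chosen so that `z₁ ≠ c` and `d ∉ B`. -/
theorem exists_compatible_triple (hp5 : 5 ≤ p) {c d : Cell p} {ℓ₁ ℓ₂ : Fin 5} (h₁₂ : ℓ₁ ≠ ℓ₂)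
    (hd₁ : intercept ℓ₁ d ≠ intercept ℓ₁ c) (hd₂ : intercept ℓ₂ d ≠ intercept ℓ₂ c) :
    ∃ G : Finset (Line p), (Plan.viaLine ℓ₁ c).Compatible (G, d) ∧
      (Plan.viaLine ℓ₂ c).Compatible (G, d) ∧ c ∉ Plan.odd (G, d) ∧ d ∉ Plan.odd (G, d) := by
  obtain ⟨z₂, hz₂₁, hz₂₂⟩ := exists_intercept_eq hp5 h₁₂ (intercept ℓ₁ d) (intercept ℓ₂ c)
  obtain ⟨w, hw₁, hw₂⟩ := exists_intercept_eq hp5 h₁₂ (intercept ℓ₁ c) (intercept ℓ₂ d)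
  have hz₂c : z₂ ≠ c := by rintro rfl; exact hd₁ hz₂₁.symm
  have hz₂w : z₂ ≠ w := by rintro rfl; exact hd₁ (hz₂₁.symm.trans hw₁)
  have hT : #({ℓ₁, ℓ₂} : Finset (Fin 5)) ≤ 2 := card_le_two
  have hS : #({(z₂, c), (z₂, w)} : Finset (Cell p × Cell p)) ≤ 2 := card_le_two
  obtain ⟨σ, hσ, hσS⟩ := exists_slope_separating hp5 {ℓ₁, ℓ₂} (S := {(z₂, c), (z₂, w)})
    (by simp [hz₂c, hz₂w]) (by omega)
  simp only [mem_insert, mem_singleton, not_or, forall_eq_or_imp, forall_eq] at hσ hσS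
  obtain ⟨hσ₁, hσ₂⟩ := hσ
  obtain ⟨hσc, hσw⟩ := hσS
  obtain ⟨z₁, hz₁σ, hz₁₁⟩ := exists_intercept_eq hp5 hσ₁ (intercept σ z₂) (intercept ℓ₁ c)
  have hz₁c : intercept ℓ₂ z₁ ≠ intercept ℓ₂ c := fun h => hσc <| by
    rw [← eq_of_intercept_eq hp5 h₁₂ hz₁₁ h, hz₁σ]
  have hz₁d : intercept ℓ₂ z₁ ≠ intercept ℓ₂ d := fun h => hσw <| by
    rw [← eq_of_intercept_eq hp5 h₁₂ (hz₁₁.trans hw₁.symm) (h.trans hw₂.symm), hz₁σ]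
  have hmem := Plan.mem_odd_three_lines h₁₂ (Ne.symm hσ₁) (Ne.symm hσ₂) d z₁ z₂ d
  set G : Finset (Line p) := {lineThru ℓ₁ d, lineThru ℓ₂ z₁, lineThru σ z₂}
  have hD₁ : ∀ z, intercept ℓ₁ z = intercept ℓ₁ c → z ∉ Plan.odd (G, d) := by
    intro z hz
    have hA : intercept ℓ₁ z ≠ intercept ℓ₁ d := fun h => hd₁ (h.symm.trans hz)
    have hBC : intercept ℓ₂ z = intercept ℓ₂ z₁ ↔ intercept σ z = intercept σ z₂ := by
      constructor <;> intro h
      · rw [eq_of_intercept_eq hp5 h₁₂ (hz.trans hz₁₁.symm) h, hz₁σ]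
      · rw [eq_of_intercept_eq hp5 hσ₁ (h.trans hz₁σ.symm) (hz.trans hz₁₁.symm)]
    have hzd : z ≠ d := by rintro rfl; exact hA rfl
    simp [hmem, xor_def, hA, hBC, hzd]
  have hD₂ : ∀ z, intercept ℓ₂ z = intercept ℓ₂ c → z ∉ Plan.odd (G, d) := by
    intro z hz
    have hB : intercept ℓ₂ z ≠ intercept ℓ₂ z₁ := fun h => hz₁c (h.symm.trans hz)
    have hAC : intercept ℓ₁ z = intercept ℓ₁ d ↔ intercept σ z = intercept σ z₂ := by
      constructor <;> intro h
      · rw [eq_of_intercept_eq hp5 h₁₂ (h.trans hz₂₁.symm) (hz.trans hz₂₂.symm)]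
      · rw [eq_of_intercept_eq hp5 hσ₂ h (hz.trans hz₂₂.symm), hz₂₁]
    have hzd : z ≠ d := by rintro rfl; exact hd₂ hz
    simp [hmem, xor_def, hB, hAC, hzd]
  have hd : d ∉ Plan.odd (G, d) := by
    have hC : intercept σ d ≠ intercept σ z₂ := fun h => hd₂ <| by
      rw [eq_of_intercept_eq hp5 hσ₁ h hz₂₁.symm, hz₂₂]
    simp [hmem, xor_def, Ne.symm hz₁d, hC]
  refine ⟨G, Plan.compatible_viaLine_of_forall_notMem ?_ hD₁,
    Plan.compatible_viaLine_of_forall_notMem ?_ hD₂, hD₁ c rfl, hd⟩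
  · simp [G, lineThru_eq_lineThru_iff, Ne.symm hd₁, h₁₂, Ne.symm hσ₁]
  · simp [G, lineThru_eq_lineThru_iff, Ne.symm hz₁c, Ne.symm h₁₂, Ne.symm hσ₂]

theorem exists_isBatchRecovery_of_repeats_at (hp5 : 5 ≤ p) (req : Fin 5 → Cell p) (c : Cell p)
    (hc : ∀ u ≠ c, #{a | req a = u} ≤ 1) : ∃ R, IsBatchRecovery req R := by
  set S : Finset (Cell p × Cell p) := image (fun a => (req a, c)) {a | req a ≠ c}
  set free := univ \ blockedSlopes S
  have hfree : ∀ ℓ ∈ free, ∀ a, req a ≠ c → intercept ℓ (req a) ≠ intercept ℓ c := by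
    intro ℓ hℓ a hac h
    simp only [free, mem_sdiff, mem_univ, true_and, blockedSlopes, mem_filter, not_exists,
      not_and] at hℓ
    exact hℓ _ (mem_image_of_mem _ (by simpa using hac)) h
  have hcard : #{a | req a = c} ≤ #free := by
    have hS := (card_blockedSlopes_le hp5 (S := S) (by simp [S])).trans card_image_le
    have := card_filter_add_card_filter_not (s := univ) (fun a => req a = c)
    rw [card_sdiff_of_subset (subset_univ _)]
    simp only [card_univ, Fintype.card_fin, ne_eq] at this hS ⊢
    omega
  refine exists_isBatchRecovery_of_menu req
    (univ.image (Plan.direct ∘ req) ∪ free.image (Plan.viaLine · c)) ?_ fun a => ?_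
  · rintro P hP Q hQ hPQ
    simp only [coe_union, coe_image, coe_univ, Set.image_univ, Set.mem_union, Set.mem_range,
      Set.mem_image, mem_coe, Function.comp_apply] at hP hQ
    rcases hP with ⟨a, rfl⟩ | ⟨ℓ, hℓ, rfl⟩ <;> rcases hQ with ⟨b, rfl⟩ | ⟨ℓ', hℓ', rfl⟩
    · exact Plan.compatible_direct_direct fun h => hPQ (by rw [h])
    · exact Plan.compatible_direct_viaLine (hfree ℓ' hℓ' a)
    · exact (Plan.compatible_direct_viaLine (hfree ℓ hℓ b)).symm
    · exact Plan.compatible_viaLine_of_ne hp5 (fun h => hPQ (by rw [h])) c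
  by_cases ha : req a = c
  · have hinj : Function.Injective (Plan.viaLine · c : Fin 5 → Plan p) := fun ℓ ℓ' h =>
      (lineThru_eq_lineThru_iff.1 (singleton_injective (congrArg Prod.fst h))).1
    rw [ha]
    calc #{b | req b = c} ≤ #free := hcard
      _ = #(free.image (Plan.viaLine · c)) := (card_image_of_injective _ hinj).symm
      _ ≤ _ := card_le_card fun P hP => mem_filter.2 ⟨mem_union_right _ hP, by
          obtain ⟨ℓ, -, rfl⟩ := mem_image.1 hP
          rfl⟩
  · refine (hc _ ha).trans (one_le_card.2 ⟨Plan.direct (req a), ?_⟩)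
    simp [Plan.direct]

theorem exists_isBatchRecovery_of_two_doubles (hp5 : 5 ≤ p) (req : Fin 5 → Cell p)
    {c d e : Cell p} (hcd : c ≠ d) (hce : c ≠ e) (hde : d ≠ e)
    (hreq : ∀ a, req a = c ∨ req a = d ∨ req a = e) (hc : #{a | req a = c} ≤ 2)
    (hd : #{a | req a = d} ≤ 2) (he : #{a | req a = e} ≤ 1) : ∃ R, IsBatchRecovery req R := by
  obtain ⟨ℓ, -, hℓ⟩ := exists_slope_separating hp5 ∅ (S := {(c, d), (c, e), (d, e)})
    (by simp [hcd, hce, hde]) (by simpa using card_le_three.trans_lt (by norm_num : 3 < 5))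
  simp only [mem_insert, mem_singleton, forall_eq_or_imp, forall_eq] at hℓ
  obtain ⟨hℓcd, hℓce, hℓde⟩ := hℓ
  refine exists_isBatchRecovery_of_menu req
    {Plan.direct c, Plan.viaLine ℓ c, Plan.direct d, Plan.viaLine ℓ d, Plan.direct e} ?_ ?_
  · simp only [coe_insert, coe_singleton, Set.pairwise_insert_of_symm, Set.pairwise_singleton,
      Set.mem_insert_iff, Set.mem_singleton_iff, forall_eq_or_imp, forall_eq, true_and]
    refine ⟨⟨⟨?_, ?_, ?_⟩, ?_, ?_, ?_⟩, ?_, ?_, ?_, ?_⟩ <;> intro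
    · exact (Plan.compatible_direct_viaLine fun _ => Ne.symm hℓde).symm
    · exact Plan.compatible_direct_viaLine fun h => absurd rfl h
    · exact Plan.compatible_direct_direct hde
    · exact (Plan.compatible_direct_viaLine fun _ => Ne.symm hℓcd).symm
    · exact Plan.compatible_viaLine_of_intercept_ne hℓcd
    · exact (Plan.compatible_direct_viaLine fun _ => Ne.symm hℓce).symm
    · exact Plan.compatible_direct_viaLine fun h => absurd rfl h
    · exact Plan.compatible_direct_direct hcd
    · exact Plan.compatible_direct_viaLine fun _ => hℓcd
    · exact Plan.compatible_direct_direct hce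
  · intro a
    rcases hreq a with h | h | h <;> rw [h]
    · simpa [Plan.direct, Plan.viaLine, filter_insert, filter_singleton, hcd.symm, hce.symm]
        using hc
    · simpa [Plan.direct, Plan.viaLine, filter_insert, filter_singleton, hcd, hde.symm] using hd
    · simpa [Plan.direct, Plan.viaLine, filter_insert, filter_singleton, hce, hde] using he

theorem exists_isBatchRecovery_of_triple_double (hp5 : 5 ≤ p) (req : Fin 5 → Cell p)
    {c d : Cell p} (hcd : c ≠ d) (hreq : ∀ a, req a = c ∨ req a = d)
    (hc : #{a | req a = c} ≤ 3) (hd : #{a | req a = d} ≤ 2) : ∃ R, IsBatchRecovery req R := by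
  obtain ⟨ℓ₁, -, hℓ₁⟩ := exists_slope_separating hp5 ∅ (S := {(d, c)}) (by simpa using hcd.symm)
    (by simp)
  obtain ⟨ℓ₂, h₂₁, hℓ₂⟩ := exists_slope_separating hp5 {ℓ₁} (S := {(d, c)})
    (by simpa using hcd.symm) (by simp)
  simp only [mem_singleton, forall_eq] at hℓ₁ hℓ₂ h₂₁
  have h₁₂ : ℓ₁ ≠ ℓ₂ := Ne.symm h₂₁
  obtain ⟨G, hG₁, hG₂, hGc, hGd⟩ := exists_compatible_triple hp5 h₁₂ hℓ₁ hℓ₂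
  have hG : ∅ ≠ G := by
    rintro rfl
    exact hGd (mem_singleton_self d)
  refine exists_isBatchRecovery_of_menu req
    {Plan.direct c, Plan.viaLine ℓ₁ c, Plan.viaLine ℓ₂ c, Plan.direct d, (G, d)} ?_ ?_
  · simp only [coe_insert, coe_singleton, Set.pairwise_insert_of_symm, Set.pairwise_singleton,
      Set.mem_insert_iff, Set.mem_singleton_iff, forall_eq_or_imp, forall_eq, true_and]
    refine ⟨⟨⟨?_, ?_, ?_⟩, ?_, ?_, ?_⟩, ?_, ?_, ?_, ?_⟩ <;> intro
    · exact Plan.compatible_direct_of_notMem hGd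
    · exact (Plan.compatible_direct_viaLine fun _ => hℓ₂).symm
    · exact hG₂
    · exact Plan.compatible_viaLine_of_ne hp5 h₁₂ c
    · exact (Plan.compatible_direct_viaLine fun _ => hℓ₁).symm
    · exact hG₁
    · exact Plan.compatible_direct_viaLine fun h => absurd rfl h
    · exact Plan.compatible_direct_viaLine fun h => absurd rfl h
    · exact Plan.compatible_direct_direct hcd
    · exact Plan.compatible_direct_of_notMem hGc
  · intro a
    rcases hreq a with h | h <;> rw [h]
    · simpa [Plan.direct, Plan.viaLine, filter_insert, filter_singleton, hcd.symm,
        lineThru_eq_lineThru_iff, h₁₂, h₂₁] using hc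
    · simpa [Plan.direct, Plan.viaLine, filter_insert, filter_singleton, hcd, hG] using hd

theorem exists_isBatchRecovery_of_two_repeated (hp5 : 5 ≤ p) (req : Fin 5 → Cell p)
    {c d : Cell p} (hcd : c ≠ d) (hc : 2 ≤ #{a | req a = c}) (hd : 2 ≤ #{a | req a = d}) :
    ∃ R, IsBatchRecovery req R := by
  by_cases hcde : ∃ a, req a ≠ c ∧ req a ≠ d
  · obtain ⟨a, hac, had⟩ := hcde
    have he : 1 ≤ #{b | req b = req a} := card_pos.2 ⟨a, by simp⟩
    have h3 := sum_card_filter_eq_le req {c, d, req a}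
    rw [sum_insert (by simp [hcd, Ne.symm hac]), sum_insert (by simp [Ne.symm had]),
      sum_singleton, Fintype.card_fin] at h3
    refine exists_isBatchRecovery_of_two_doubles hp5 req hcd (Ne.symm hac) (Ne.symm had)
      (fun b => ?_) (by omega) (by omega) (by omega)
    by_contra! hb
    have hb' : 1 ≤ #{b' | req b' = req b} := card_pos.2 ⟨b, by simp⟩
    have h4 := sum_card_filter_eq_le req {c, d, req a, req b}
    rw [sum_insert (by simp [hcd, Ne.symm hac, Ne.symm hb.1]),
      sum_insert (by simp [Ne.symm had, Ne.symm hb.2.1]), sum_insert (by simp [Ne.symm hb.2.2]),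
      sum_singleton, Fintype.card_fin] at h4
    omega
  · push Not at hcde
    have h2 := sum_card_filter_eq_le req {c, d}
    rw [sum_pair hcd, Fintype.card_fin] at h2
    rcases le_or_gt #{a | req a = d} 2 with hd2 | hd2
    · exact exists_isBatchRecovery_of_triple_double hp5 req hcd
        (fun a => or_iff_not_imp_left.2 (hcde a)) (by omega) hd2
    · exact exists_isBatchRecovery_of_triple_double hp5 req (Ne.symm hcd)
        (fun a => (or_iff_not_imp_left.2 (hcde a)).symm) (by omega) (by omega)

end Geometry

end ArrayCode

/-- For a prime `p ≥ 5`, the binary code of dimension `p²` and length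
`p² + 5p + 1` obtained from the array code `C(r = p, p, S = {0,1,2,3,4})` by appending a
global parity bit is a `5`-batch code: every multiset request of `5` information coordinates
can be answered by `5` pairwise disjoint recovering sets.  In particular
`r_B(p², 5) ≤ 5p + 1`. -/
theorem stmt19 (p : ℕ) (hp : p.Prime) (hp5 : 5 ≤ p) :
    ∀ req : Fin 5 → Fin p × Fin p,
      ∃ R : Fin 5 → Finset ((Fin p × Fin p) ⊕ (Fin 5 × Fin p) ⊕ Unit),
        (∀ a b, a ≠ b → Disjoint (R a) (R b)) ∧
        ∀ a, ∀ x x' : Fin p × Fin p → ZMod 2,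
          (∀ c ∈ R a, ext5Encode p x c = ext5Encode p x' c) →
          x (req a) = x' (req a) := by
  have : Fact p.Prime := ⟨hp⟩
  intro req
  by_cases h : ∃ c d, c ≠ d ∧ 2 ≤ #{a | req a = c} ∧ 2 ≤ #{a | req a = d}
  · obtain ⟨c, d, hcd, hc, hd⟩ := h
    exact ArrayCode.exists_isBatchRecovery_of_two_repeated hp5 req hcd hc hd
  · push Not at h
    obtain ⟨c, hc⟩ : ∃ c, ∀ u ≠ c, #{a | req a = u} ≤ 1 := by
      by_cases h₁ : ∃ c, 2 ≤ #{a | req a = c}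
      · obtain ⟨c, hc⟩ := h₁
        exact ⟨c, fun u hu => Nat.le_of_lt_succ (h c u hu.symm hc)⟩
      · push Not at h₁
        exact ⟨req 0, fun u _ => Nat.le_of_lt_succ (h₁ u)⟩
    exact ArrayCode.exists_isBatchRecovery_of_repeats_at hp5 req c hc
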